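/- arXiv:2101.11136 — 2 statements merged into one kernel-verified Lean document; each statement's English description precedes it below -/
import Mathlib

section
/- Let k ≥ 11 be an integer and let γ be a real number with 1/e ≤ γ < 1, where e is Euler's number. Then ∑_{r=0}^{⌊k-γk⌋} k/(k-r) ≤ k + 4e + 1/2, where the sum is over integers r and the division is over the reals. -/
/-!
Each term `k / (k - r)` is at most `k (log (k - r) - log (k - r - 1))`, so all terms but the last
telescope to at most `k log (k / (k - m))`, where `m = ⌊k - γk⌋₊`. Since `γ ≥ 1/e`, we have
`k - m ≥ k / e`, so this is at most `k`, and the last term `k / (k - m)` is at most `e`.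
-/

open Finset Real

lemma one_div_le_log_sub_log {y : ℝ} (hy : 1 < y) : 1 / y ≤ log y - log (y - 1) := by
  have h := one_sub_inv_le_log_of_pos (show 0 < y / (y - 1) by apply div_pos <;> linarith)
  rw [log_div (by linarith) (by linarith), inv_div, one_sub_div (by linarith)] at h
  simpa using h

lemma sum_one_div_sub_le_log_sub_log {x : ℝ} {m : ℕ} (h : (m : ℝ) < x) :
    ∑ r ∈ range m, 1 / (x - r) ≤ log x - log (x - m) := by
  induction m with
  | zero => simp
  | succ m ih =>
    push_cast at h ⊢
    have hstep := one_div_le_log_sub_log (show 1 < x - m by linarith)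
    rw [sum_range_succ, sub_sub] at *
    linarith [ih (by linarith)]

lemma sum_div_sub_le_add_exp_one {x : ℝ} (hx : 0 < x) {m : ℕ} (hm : (m : ℝ) ≤ x - x / exp 1) :
    ∑ r ∈ range (m + 1), x / (x - r) ≤ x + exp 1 := by
  have hxm : x / exp 1 ≤ x - m := by linarith
  have hxm_pos : 0 < x - m := (by positivity : 0 < x / exp 1).trans_le hxm
  have hlast : x / (x - m) ≤ exp 1 :=
    (div_le_iff₀ hxm_pos).2 ((div_le_iff₀' (exp_pos 1)).1 hxm)
  have hlog : log x - log (x - m) ≤ 1 := by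
    rw [← log_div hx.ne' hxm_pos.ne', ← log_exp 1]
    exact log_le_log (by positivity) hlast
  calc ∑ r ∈ range (m + 1), x / (x - r)
      = x * ∑ r ∈ range m, 1 / (x - r) + x / (x - m) := by
        rw [sum_range_succ, mul_sum]; simp only [mul_one_div]
    _ ≤ x * 1 + exp 1 := by
        gcongr
        exact (sum_one_div_sub_le_log_sub_log (by linarith)).trans hlog
    _ = x + exp 1 := by rw [mul_one]

theorem sum_expected_symbols_large_gamma_general
    (k : ℕ) (γ : ℝ) (hγe : 1 / Real.exp 1 ≤ γ) :
    ∑ r ∈ Finset.range (⌊(k : ℝ) - γ * k⌋₊ + 1), (k : ℝ) / ((k : ℝ) - r)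
      ≤ (k : ℝ) + 4 * Real.exp 1 + 1 / 2 := by
  rcases k.eq_zero_or_pos with rfl | hk
  · simp only [CharP.cast_eq_zero, zero_div, sum_const_zero]; positivity
  have hk' : (0 : ℝ) < k := by exact_mod_cast hk
  have hfloor : (⌊(k : ℝ) - γ * k⌋₊ : ℝ) ≤ k - k / exp 1 := by
    have hγk : (k : ℝ) / exp 1 ≤ γ * k := by
      rw [div_eq_mul_one_div, mul_comm]; gcongr
    have hnonneg : 0 ≤ (k : ℝ) - k / exp 1 :=
      sub_nonneg.2 (div_le_self hk'.le (one_le_exp zero_le_one))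
    calc (⌊(k : ℝ) - γ * k⌋₊ : ℝ) ≤ ⌊(k : ℝ) - k / exp 1⌋₊ := by gcongr
      _ ≤ k - k / exp 1 := Nat.floor_le hnonneg
  linarith [sum_div_sub_le_add_exp_one hk' hfloor, exp_pos 1]

/-- For `k ≥ 11` and `1/e ≤ γ < 1`: `∑_{r=0}^{⌊k-γk⌋} k/(k-r) ≤ k + 4e + 1/2`. -/
theorem sum_expected_symbols_large_gamma
    (k : ℕ) (hk : 11 ≤ k) (γ : ℝ) (hγe : 1 / Real.exp 1 ≤ γ) (hγ1 : γ < 1) :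
    ∑ r ∈ Finset.range (⌊(k : ℝ) - γ * k⌋₊ + 1), (k : ℝ) / ((k : ℝ) - r)
      ≤ (k : ℝ) + 4 * Real.exp 1 + 1 / 2 :=
  sum_expected_symbols_large_gamma_general k γ hγe
end

section
/- Let k ≥ 11 be an integer, let e be Euler's number, and let γ be a real number with 0 < γ < 1/e and γ·k ≥ 1. Then ∑_{r=0}^{⌊k - k/e⌋} k/(k-r) + e·(⌊(1-γ)k⌋ - ⌊k - k/e⌋) ≤ 2k - e·γ·k + 6e, where the sum is over integers r and all divisions are over the reals. -/
/-!
Compare the sum with an integral: since `1/x ≤ log x - log (x - 1)`, the first `m + 1` terms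
telescope to at most `k (log k - log (k - m - 1))`. For `m ≤ k - k/e` this is at most
`k (1 + log (k / (k - e))) ≤ k + k e / (k - e) ≤ k + 5e`. The floor difference is at most
`(1 - γ) k - (k - k/e - 1)`, which after multiplying by `e` contributes `k - e γ k + e`.
-/

open Real Finset

lemma one_div_le_log_sub_log_sub_one {x : ℝ} (hx : 1 < x) :
    1 / x ≤ log x - log (x - 1) := by
  have h := one_sub_inv_le_log_of_pos (x := x / (x - 1)) (by apply div_pos <;> linarith)
  rw [log_div (by positivity) (by linarith), inv_div] at h
  have : 1 - (x - 1) / x = 1 / x := by field_simp; ring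
  linarith

lemma sum_range_div_sub_le_mul_log {k : ℝ} {n : ℕ} (hn : n < k) :
    ∑ r ∈ range n, k / (k - r) ≤ k * (log k - log (k - n)) := by
  have hk : 0 ≤ k := (Nat.cast_nonneg n).trans hn.le
  calc ∑ r ∈ range n, k / (k - r)
      ≤ ∑ r ∈ range n, (k * log (k - r) - k * log (k - (r + 1 : ℕ))) := by
        refine sum_le_sum fun r hr => ?_
        have hr : (r : ℝ) + 1 < k := lt_of_le_of_lt (by exact_mod_cast mem_range.mp hr) hn
        have := one_div_le_log_sub_log_sub_one (x := k - r) (by linarith)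
        rw [div_eq_mul_one_div, Nat.cast_succ, ← sub_sub, ← mul_sub]
        exact mul_le_mul_of_nonneg_left this hk
    _ = k * (log k - log (k - n)) := by
        rw [sum_range_sub' (fun r : ℕ => k * log (k - r)), Nat.cast_zero, sub_zero, mul_sub]

lemma log_sub_log_sub_le_div {a b : ℝ} (ha : 0 < a) (hb : b < a) :
    log a - log (a - b) ≤ b / (a - b) := by
  have hab : 0 < a - b := sub_pos.mpr hb
  have h := log_le_sub_one_of_pos (div_pos ha hab)
  rw [log_div ha.ne' hab.ne'] at h
  have : a / (a - b) - 1 = b / (a - b) := by field_simp; ring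
  linarith

lemma sum_range_succ_div_sub_le {k : ℝ} {m : ℕ} (hk : exp 1 < k) (hm : m ≤ k - k / exp 1) :
    ∑ r ∈ range (m + 1), k / (k - r) ≤ k + k * exp 1 / (k - exp 1) := by
  have he : 0 < exp 1 := exp_pos 1
  have hk0 : 0 ≤ k := by linarith
  have hke : 0 < k - exp 1 := by linarith
  have hk_div : 1 < k / exp 1 := by rwa [one_lt_div he]
  have htail : k / exp 1 - 1 ≤ k - (m + 1 : ℕ) := by push_cast; linarith
  have hlog_tail : log (k / exp 1 - 1) = log (k - exp 1) - 1 := by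
    rw [div_sub_one he.ne', log_div hke.ne' he.ne', log_exp]
  calc ∑ r ∈ range (m + 1), k / (k - r)
      ≤ k * (log k - log (k - (m + 1 : ℕ))) :=
        sum_range_div_sub_le_mul_log (by push_cast; linarith)
    _ ≤ k * (log k - log (k / exp 1 - 1)) := by gcongr
    _ = k + k * (log k - log (k - exp 1)) := by rw [hlog_tail]; ring
    _ ≤ k + k * (exp 1 / (k - exp 1)) := by
        gcongr
        exact log_sub_log_sub_le_div (by linarith) hk
    _ = k + k * exp 1 / (k - exp 1) := by rw [mul_div_assoc]

lemma exp_mul_floor_sub_floor_le {k γ : ℝ} (h : 0 ≤ (1 - γ) * k) :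
    exp 1 * ((⌊(1 - γ) * k⌋₊ : ℝ) - ⌊k - k / exp 1⌋₊) ≤ k - exp 1 * γ * k + exp 1 := by
  have hγ : (⌊(1 - γ) * k⌋₊ : ℝ) ≤ (1 - γ) * k := Nat.floor_le h
  have hm : k - k / exp 1 < ⌊k - k / exp 1⌋₊ + 1 := Nat.lt_floor_add_one _
  calc exp 1 * ((⌊(1 - γ) * k⌋₊ : ℝ) - ⌊k - k / exp 1⌋₊)
      ≤ exp 1 * ((1 - γ) * k - (k - k / exp 1 - 1)) := by
        gcongr
        linarith
    _ = k - exp 1 * γ * k + exp 1 := by field_simp; ring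

theorem sum_expected_symbols_small_gamma_general
    (k : ℕ) (hk : 11 ≤ k) (γ : ℝ) (hγe : γ < 1 / Real.exp 1) :
    ∑ r ∈ Finset.range (⌊(k : ℝ) - k / Real.exp 1⌋₊ + 1), (k : ℝ) / ((k : ℝ) - r)
        + Real.exp 1 * ((⌊(1 - γ) * k⌋₊ : ℝ) - (⌊(k : ℝ) - k / Real.exp 1⌋₊ : ℝ))
      ≤ 2 * k - Real.exp 1 * γ * k + 6 * Real.exp 1 := by
  have he : exp 1 < 3 := exp_one_lt_three
  have he1 : 1 < exp 1 := one_lt_exp_iff.mpr one_pos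
  have hk_real : (11 : ℝ) ≤ k := by exact_mod_cast hk
  have hsum := sum_range_succ_div_sub_le (k := k) (m := ⌊(k : ℝ) - k / exp 1⌋₊) (by linarith)
    (Nat.floor_le (sub_nonneg.mpr (div_le_self (by positivity) he1.le)))
  have hratio : (k : ℝ) * exp 1 / (k - exp 1) ≤ 5 * exp 1 := by
    rw [div_le_iff₀ (by linarith)]
    nlinarith
  have hγ1 : γ < 1 := hγe.trans (by rw [div_lt_one (by linarith)]; exact he1)
  have hfloor := exp_mul_floor_sub_floor_le (k := k) (γ := γ)
    (mul_nonneg (by linarith) (Nat.cast_nonneg k))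
  linarith

/-- For `k ≥ 11` and `0 < γ < 1/e` with `γ·k ≥ 1`:
`∑_{r=0}^{⌊k - k/e⌋} k/(k-r) + e·(⌊(1-γ)k⌋ - ⌊k - k/e⌋) ≤ 2k - e·γ·k + 6e`. -/
theorem sum_expected_symbols_small_gamma
    (k : ℕ) (hk : 11 ≤ k) (γ : ℝ) (hγ0 : 0 < γ) (hγe : γ < 1 / Real.exp 1)
    (hγk : 1 ≤ γ * k) :
    ∑ r ∈ Finset.range (⌊(k : ℝ) - k / Real.exp 1⌋₊ + 1), (k : ℝ) / ((k : ℝ) - r)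
        + Real.exp 1 * ((⌊(1 - γ) * k⌋₊ : ℝ) - (⌊(k : ℝ) - k / Real.exp 1⌋₊ : ℝ))
      ≤ 2 * k - Real.exp 1 * γ * k + 6 * Real.exp 1 :=
  sum_expected_symbols_small_gamma_general k hk γ hγe
end
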